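/- For every c > 0, f > 0 and L ≥ 0, the function φ(σ) = (1/8)(fσ)^{3/4} · cosh((1/2)(fσ)^{1/4}) / sinh³((1/2)(fσ)^{1/4}) · exp(−(L/c)((√(fσ)/4)(coth²((1/2)(fσ)^{1/4}) − 2/3) − 1)) satisfies φ(σ) → 1 as σ → 0⁺, and −φ'(0) = f(c + L)/(240c). -/

import Mathlib

open Real Filter

/-- The conditional Laplace transform `E[e^{-σ V} | L(d) = L]` of the rescaled hull volume
given the rescaled perimeter `L`. -/
noncomputable def condVolLaplace (c f L σ : ℝ) : ℝ :=
  (1 / 8) * (f * σ) ^ ((3 : ℝ) / 4) *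
    (Real.cosh ((1 / 2) * (f * σ) ^ ((1 : ℝ) / 4)) /
      Real.sinh ((1 / 2) * (f * σ) ^ ((1 : ℝ) / 4)) ^ 3) *
    Real.exp (-(L / c) *
      ((Real.sqrt (f * σ) / 4) *
          ((Real.cosh ((1 / 2) * (f * σ) ^ ((1 : ℝ) / 4)) /
              Real.sinh ((1 / 2) * (f * σ) ^ ((1 : ℝ) / 4))) ^ 2 - 2 / 3) - 1))

/-!
Substituting `t = (fσ)^{1/4}/2`, i.e. `σ = 16 t⁴ / f`, turns `φ` into
`cosh t (t / sinh t)³ · exp (-(L/c) (t² coth² t - 2t²/3 - 1))`. Writing `cosh` and `sinh` through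
`exp` and cutting each `e^{at}` after its Taylor polynomial of degree 7 gives
`t³ cosh t - sinh³ t = -t⁷/15 + o(t⁷)` and `t² cosh² t - (2t²/3 + 1) sinh² t = t⁶/15 + o(t⁶)`,
so the two factors are `1 - t⁴/15 + o(t⁴)` and `1 - (L/c) t⁴/15 + o(t⁴)`. Hence
`φ - 1 = -(1 + L/c) t⁴/15 + o(t⁴) = -f (c + L) σ / (240 c) + o(σ)`.
-/

open Finset Nat Asymptotics Topology

lemma tendsto_pow_nhdsNE_zero {𝕜 : Type*} [NormedDivisionRing 𝕜] {n : ℕ} (hn : n ≠ 0) :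
    Tendsto (fun t : 𝕜 => t ^ n) (𝓝[≠] 0) (𝓝[≠] 0) :=
  tendsto_nhdsWithin_iff.mpr
    ⟨((continuous_pow n).tendsto' 0 0 (zero_pow hn)).mono_left nhdsWithin_le_nhds,
      eventually_mem_nhdsWithin.mono fun _ ht => pow_ne_zero n ht⟩

lemma tendsto_const_mul_rpow_nhdsGT_zero {a b p : ℝ} (ha : 0 < a) (hb : 0 < b) (hp : 0 < p) :
    Tendsto (fun x => a * (b * x) ^ p) (𝓝[>] 0) (𝓝[>] 0) := by
  have hcont : Continuous fun x : ℝ => a * (b * x) ^ p :=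
    continuous_const.mul ((continuous_const_mul b).rpow_const fun _ => Or.inr hp.le)
  refine tendsto_nhdsWithin_iff.mpr ⟨?_, ?_⟩
  · exact (hcont.tendsto' 0 0 (by simp [Real.zero_rpow hp.ne'])).mono_left nhdsWithin_le_nhds
  · filter_upwards [self_mem_nhdsWithin] with x (hx : 0 < x)
    exact mul_pos ha (Real.rpow_pos_of_pos (mul_pos hb hx) p)

section
variable {α : Type*} {l : Filter α} {g : α → ℝ}

lemma tendsto_of_tendsto_sub_div {F : α → ℝ} {y a : ℝ} (hg : Tendsto g l (𝓝[≠] 0))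
    (h : Tendsto (fun x => (F x - y) / g x) l (𝓝 a)) : Tendsto F l (𝓝 y) := by
  obtain ⟨hg, hg0⟩ := tendsto_nhdsWithin_iff.mp hg
  have h' := (h.mul hg).add_const y
  rw [mul_zero, zero_add] at h'
  refine h'.congr' ?_
  filter_upwards [hg0] with x (hx : g x ≠ 0)
  field_simp
  ring

lemma tendsto_mul_exp_sub_one_div {A B : α → ℝ} {a b : ℝ} (hg : Tendsto g l (𝓝[≠] 0))
    (hA : Tendsto (fun x => (A x - 1) / g x) l (𝓝 a))
    (hB : Tendsto (fun x => B x / g x) l (𝓝 b)) :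
    Tendsto (fun x => (A x * exp (B x) - 1) / g x) l (𝓝 (a + b)) := by
  have hB0 : Tendsto B l (𝓝 0) := tendsto_of_tendsto_sub_div hg (by simpa using hB)
  have hexp : Tendsto (fun x => exp (B x)) l (𝓝 1) :=
    (Real.continuous_exp.tendsto' 0 1 Real.exp_zero).comp hB0
  have hslope : Tendsto (fun x => dslope exp 0 (B x)) l (𝓝 1) := by
    have h := (continuousAt_dslope_same.mpr (Real.differentiableAt_exp (x := 0))).tendsto
    rw [dslope_same, Real.deriv_exp, Real.exp_zero] at h
    exact h.comp hB0
  have h := (hA.mul hexp).add (hB.mul hslope)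
  rw [mul_one, mul_one] at h
  refine h.congr' (Eventually.of_forall fun x => ?_)
  have hsplit : exp (B x) - 1 = B x * dslope exp 0 (B x) := by
    simpa using (sub_smul_dslope exp 0 (B x)).symm
  rw [div_mul_eq_mul_div, div_mul_eq_mul_div, ← add_div]
  congr 1
  linear_combination -hsplit

end

noncomputable def expRemainder (N : ℕ) (x : ℝ) : ℝ := exp x - ∑ i ∈ range N, x ^ i / i !

lemma tendsto_expRemainder_mul_div_pow (a : ℝ) {n N : ℕ} (h : n < N) :
    Tendsto (fun t => expRemainder N (a * t) / t ^ n) (𝓝 0) (𝓝 0) := by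
  have hlin : Tendsto (fun t : ℝ => a * t) (𝓝 0) (𝓝 0) := by
    simpa using (continuous_const_mul a).tendsto 0
  have hpow : (fun t : ℝ => (a * t) ^ N) =O[𝓝 0] fun t => t ^ N := by
    simp_rw [mul_pow]; exact isBigO_const_mul_self _ _ _
  exact IsLittleO.tendsto_div_nhds_zero <|
    (((Real.exp_sub_sum_range_isBigO_pow N).comp_tendsto hlin).trans hpow).trans_isLittleO
      (isLittleO_pow_pow h)

lemma tendsto_pow_three_mul_cosh_sub_sinh_pow_three_div :
    Tendsto (fun t : ℝ => (t ^ 3 * cosh t - sinh t ^ 3) / t ^ 7) (𝓝[≠] 0) (𝓝 (-1 / 15)) := by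
  have hR (a : ℝ) (n : ℕ) (h : n < 8) :
      Tendsto (fun t => expRemainder 8 (a * t) / t ^ n) (𝓝[≠] 0) (𝓝 0) :=
    (tendsto_expRemainder_mul_div_pow a h).mono_left nhdsWithin_le_nhds
  have hpoly : Tendsto (fun t : ℝ => -1 / 15 + t ^ 2 / 720) (𝓝[≠] 0) (𝓝 (-1 / 15)) :=
    tendsto_nhdsWithin_of_tendsto_nhds <| by
      simpa using (by fun_prop : Continuous fun t : ℝ => -1 / 15 + t ^ 2 / 720).tendsto 0
  -- Once each `e^{at}` is split into `∑ i < 8, (at)^i/i!` plus `expRemainder 8 (at)`, the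
  -- quotient is exactly this combination.
  have hsum := ((((((hpoly.add ((hR 1 4 (by norm_num)).const_mul (1 / 2))).add
    ((hR (-1) 4 (by norm_num)).const_mul (1 / 2))).sub
    ((hR 3 7 (by norm_num)).const_mul (1 / 8))).add
    ((hR 1 7 (by norm_num)).const_mul (3 / 8))).sub
    ((hR (-1) 7 (by norm_num)).const_mul (3 / 8))).add
    ((hR (-3) 7 (by norm_num)).const_mul (1 / 8)))
  simp only [mul_zero, add_zero, sub_zero] at hsum
  refine hsum.congr' ?_
  filter_upwards [self_mem_nhdsWithin] with t (ht : t ≠ 0)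
  have h3 : exp (3 * t) = exp t ^ 3 := by rw [← Real.exp_nat_mul]; norm_num
  have h3' : exp (-3 * t) = (exp t)⁻¹ ^ 3 := by rw [← Real.exp_neg, ← Real.exp_nat_mul]; ring_nf
  simp only [expRemainder, sum_range_succ, sum_range_zero, Nat.factorial,
    Real.cosh_eq, Real.sinh_eq, one_mul, neg_one_mul, Real.exp_neg, h3, h3']
  field_simp
  ring

lemma tendsto_sq_mul_cosh_sq_sub_sinh_sq_div :
    Tendsto (fun t : ℝ => (t ^ 2 * cosh t ^ 2 - (2 * t ^ 2 / 3 + 1) * sinh t ^ 2) / t ^ 6)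
      (𝓝[≠] 0) (𝓝 (1 / 15)) := by
  have hR (a : ℝ) : Tendsto (fun t => expRemainder 8 (a * t) / t ^ 6) (𝓝[≠] 0) (𝓝 0) :=
    (tendsto_expRemainder_mul_div_pow a (by norm_num)).mono_left nhdsWithin_le_nhds
  have hpoly : Tendsto (fun t : ℝ => 1 / 15 + 2 * t ^ 2 / 135) (𝓝[≠] 0) (𝓝 (1 / 15)) :=
    tendsto_nhdsWithin_of_tendsto_nhds <| by
      simpa using (by fun_prop : Continuous fun t : ℝ => 1 / 15 + 2 * t ^ 2 / 135).tendsto 0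
  have hcoeff : Tendsto (fun t : ℝ => (t ^ 2 / 3 - 1) / 4) (𝓝[≠] 0) (𝓝 (-1 / 4)) :=
    tendsto_nhdsWithin_of_tendsto_nhds <| by
      simpa using (by fun_prop : Continuous fun t : ℝ => (t ^ 2 / 3 - 1) / 4).tendsto 0
  have hsum := hpoly.add (hcoeff.mul ((hR 2).add (hR (-2))))
  simp only [mul_zero, add_zero] at hsum
  refine hsum.congr' ?_
  filter_upwards [self_mem_nhdsWithin] with t (ht : t ≠ 0)
  have h2 : exp (2 * t) = exp t ^ 2 := by rw [← Real.exp_nat_mul]; norm_num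
  have h2' : exp (-2 * t) = (exp t)⁻¹ ^ 2 := by rw [← Real.exp_neg, ← Real.exp_nat_mul]; ring_nf
  simp only [expRemainder, sum_range_succ, sum_range_zero, Nat.factorial,
    Real.cosh_eq, Real.sinh_eq, Real.exp_neg, h2, h2']
  field_simp
  ring

lemma tendsto_self_div_sinh : Tendsto (fun t : ℝ => t / sinh t) (𝓝[≠] 0) (𝓝 1) := by
  have h := (hasDerivAt_iff_tendsto_slope_zero.mp (Real.hasDerivAt_sinh 0)).inv₀ (by simp)
  simpa [div_eq_mul_inv, mul_comm] using h

lemma tendsto_cosh_mul_self_div_sinh_pow_three_sub_one_div :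
    Tendsto (fun t : ℝ => (cosh t * (t / sinh t) ^ 3 - 1) / t ^ 4) (𝓝[≠] 0) (𝓝 (-1 / 15)) := by
  have h := tendsto_pow_three_mul_cosh_sub_sinh_pow_three_div.mul (tendsto_self_div_sinh.pow 3)
  rw [one_pow, mul_one] at h
  refine h.congr' ?_
  filter_upwards [self_mem_nhdsWithin] with t (ht : t ≠ 0)
  have hs : sinh t ≠ 0 := Real.sinh_ne_zero.mpr ht
  field_simp

lemma tendsto_sq_mul_coth_sq_sub_div :
    Tendsto (fun t : ℝ => (t ^ 2 * (cosh t / sinh t) ^ 2 - 2 * t ^ 2 / 3 - 1) / t ^ 4)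
      (𝓝[≠] 0) (𝓝 (1 / 15)) := by
  have h := tendsto_sq_mul_cosh_sq_sub_sinh_sq_div.mul (tendsto_self_div_sinh.pow 2)
  rw [one_pow, mul_one] at h
  refine h.congr' ?_
  filter_upwards [self_mem_nhdsWithin] with t (ht : t ≠ 0)
  have hs : sinh t ≠ 0 := Real.sinh_ne_zero.mpr ht
  field_simp
  ring

noncomputable def condVolLaplaceScaled (c L t : ℝ) : ℝ :=
  cosh t * (t / sinh t) ^ 3 *
    exp (-(L / c) * (t ^ 2 * (cosh t / sinh t) ^ 2 - 2 * t ^ 2 / 3 - 1))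

lemma tendsto_condVolLaplaceScaled_sub_one_div (c L : ℝ) :
    Tendsto (fun t => (condVolLaplaceScaled c L t - 1) / t ^ 4) (𝓝[≠] 0)
      (𝓝 (-1 / 15 + -(L / c) * (1 / 15))) := by
  refine tendsto_mul_exp_sub_one_div (tendsto_pow_nhdsNE_zero four_ne_zero)
    tendsto_cosh_mul_self_div_sinh_pow_three_sub_one_div ?_
  simpa only [mul_div_assoc] using tendsto_sq_mul_coth_sq_sub_div.const_mul (-(L / c))

lemma condVolLaplace_eq_scaled {c f L σ t : ℝ} (ht : 0 ≤ t) (h : f * σ = (2 * t) ^ 4) :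
    condVolLaplace c f L σ = condVolLaplaceScaled c L t := by
  have hroot : (f * σ) ^ ((1 : ℝ) / 4) = 2 * t := by
    rw [h, ← Real.rpow_natCast, ← Real.rpow_mul (by positivity)]
    norm_num
  have hroot3 : (f * σ) ^ ((3 : ℝ) / 4) = (2 * t) ^ 3 := by
    rw [h, ← Real.rpow_natCast, ← Real.rpow_mul (by positivity)]
    norm_num
  have hsqrt : Real.sqrt (f * σ) = (2 * t) ^ 2 := by
    rw [h, show (2 * t) ^ 4 = ((2 * t) ^ 2) ^ 2 by ring, Real.sqrt_sq (by positivity)]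
  rw [condVolLaplace, condVolLaplaceScaled, hroot, hroot3, hsqrt,
    show (1 : ℝ) / 2 * (2 * t) = t by ring]
  ring_nf

theorem condVolLaplace_limit_and_derivative_general (c f L : ℝ) (hc : 0 < c) (hf : 0 < f) :
    Tendsto (fun σ : ℝ => condVolLaplace c f L σ) (nhdsWithin 0 (Set.Ioi 0)) (nhds 1) ∧
    Tendsto (fun σ : ℝ => (condVolLaplace c f L σ - 1) / σ) (nhdsWithin 0 (Set.Ioi 0))
      (nhds (-(f * (c + L) / (240 * c)))) := by
  set τ : ℝ → ℝ := fun σ => 1 / 2 * (f * σ) ^ ((1 : ℝ) / 4)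
  have hτ : Tendsto τ (𝓝[>] 0) (𝓝[≠] 0) :=
    tendsto_nhdsWithin_mono_right (by simp)
      (tendsto_const_mul_rpow_nhdsGT_zero one_half_pos hf (by norm_num))
  have hscale : ∀ᶠ σ in 𝓝[>] 0, 0 ≤ τ σ ∧ f * σ = (2 * τ σ) ^ 4 := by
    filter_upwards [self_mem_nhdsWithin] with σ (hσ : 0 < σ)
    refine ⟨by positivity, ?_⟩
    rw [show 2 * τ σ = (f * σ) ^ ((4 : ℕ)⁻¹ : ℝ) by simp [τ],
      Real.rpow_inv_natCast_pow (by positivity) four_ne_zero]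
  have hlim := tendsto_condVolLaplaceScaled_sub_one_div c L
  constructor
  · have h := tendsto_of_tendsto_sub_div (tendsto_pow_nhdsNE_zero four_ne_zero) hlim
    refine (h.comp hτ).congr' ?_
    filter_upwards [hscale] with σ ⟨hτ0, hfσ⟩
    exact (condVolLaplace_eq_scaled hτ0 hfσ).symm
  · have hval : f / 16 * (-1 / 15 + -(L / c) * (1 / 15)) = -(f * (c + L) / (240 * c)) := by
      field_simp
      ring
    refine (hval ▸ (hlim.const_mul (f / 16)).comp hτ).congr' ?_
    filter_upwards [hscale] with σ ⟨hτ0, hfσ⟩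
    rw [Function.comp_apply, condVolLaplace_eq_scaled hτ0 hfσ]
    generalize τ σ = t at hτ0 hfσ
    obtain rfl : σ = (2 * t) ^ 4 / f := by rw [← hfσ]; field_simp
    field_simp
    ring

theorem condVolLaplace_limit_and_derivative (c f L : ℝ) (hc : 0 < c) (hf : 0 < f)
    (hL : 0 ≤ L) :
    Tendsto (fun σ : ℝ => condVolLaplace c f L σ) (nhdsWithin 0 (Set.Ioi 0)) (nhds 1) ∧
    Tendsto (fun σ : ℝ => (condVolLaplace c f L σ - 1) / σ) (nhdsWithin 0 (Set.Ioi 0))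
      (nhds (-(f * (c + L) / (240 * c)))) :=
  condVolLaplace_limit_and_derivative_general c f L hc hf
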